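/- For all m, M > 0 and every t₁ ∈ ℕ there exists t₂ ∈ ℕ such that the following holds: for every (m,M)-regular profile f that is symmetric about some c ∈ ℝ, if D(U^{t₁} f) ≤ 2, then U^{t₂} f is a consensus (a constant function). -/

import Mathlib

/-!
While the diameter exceeds `2`, no neighbourhood contains both extreme agents, so at least one
endpoint of `N_α` moves at a speed comparable to `α`. Since `U f(α)` is the mean of `f` over
`[inf N_α, sup N_α]`, this makes `U` send `(μ, Λ)`-regular profiles to
`(μ² / (2Λ), Λ² / μ)`-regular ones. Updating preserves monotonicity and symmetry and commutes
with adding constants, so we may take `f` symmetric about `0`. At the first time `s ≤ t₁` at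
which the diameter is at most `2`, the profile is still regular with constants depending only on
`m`, `M`, `t₁`, and one more update moves agent `0` so far up that its neighbourhood becomes
`[0, b]` with `b ≥ 1/2 + δ` for a uniform `δ > 0`. From then on symmetry gives
`U f(1) ≤ (1 - b) / b · f(1)` with `b` nondecreasing, so `f(1)` decays geometrically; once it is
at most `1/2`, every neighbourhood is `[0, 1]` and the next update is the consensus `0`.
-/

open MeasureTheory Set

/-- The neighbourhood `N_α(f)` of an agent `α ∈ [0,1]`:
all agents `β ∈ [0,1]` whose opinion is within distance 1 of that of `α`. -/
def nbhdHK (f : ℝ → ℝ) (α : ℝ) : Set ℝ :=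
  {β | β ∈ Icc (0:ℝ) 1 ∧ |f β - f α| ≤ 1}

/-- The Hegselmann–Krause updating operator `U`:
`Uf(α)` is the average of `f` over `N_α(f)` if that set has positive Lebesgue
measure, and `f(α)` otherwise. -/
noncomputable def updateHK (f : ℝ → ℝ) (α : ℝ) : ℝ :=
  if 0 < (volume (nbhdHK f α)).toReal then
    (∫ β in nbhdHK f α, f β) / (volume (nbhdHK f α)).toReal
  else f α

/-- `f` is `(m,M)`-regular on `S`: `m·|α-β| ≤ |f(α)-f(β)| ≤ M·|α-β|` on `S`. -/
def RegularOnHK (m M : ℝ) (f : ℝ → ℝ) (S : Set ℝ) : Prop :=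
  ∀ α ∈ S, ∀ β ∈ S, m * |α - β| ≤ |f α - f β| ∧ |f α - f β| ≤ M * |α - β|

namespace HK

local notation "I01" => Icc (0:ℝ) 1

section Neighbourhood

variable {g : ℝ → ℝ} {α α' : ℝ}

lemma nbhdHK_subset (g : ℝ → ℝ) (α : ℝ) : nbhdHK g α ⊆ I01 := fun _ h => h.1

lemma mem_nbhdHK_self (g : ℝ → ℝ) (hα : α ∈ I01) : α ∈ nbhdHK g α := ⟨hα, by simp⟩

lemma bddBelow_nbhdHK (g : ℝ → ℝ) (α : ℝ) : BddBelow (nbhdHK g α) :=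
  bddBelow_Icc.mono (nbhdHK_subset g α)

lemma bddAbove_nbhdHK (g : ℝ → ℝ) (α : ℝ) : BddAbove (nbhdHK g α) :=
  bddAbove_Icc.mono (nbhdHK_subset g α)

lemma csInf_nbhdHK_le (hα : α ∈ I01) : sInf (nbhdHK g α) ≤ α :=
  csInf_le (bddBelow_nbhdHK g α) (mem_nbhdHK_self g hα)

lemma le_csSup_nbhdHK (hα : α ∈ I01) : α ≤ sSup (nbhdHK g α) :=
  le_csSup (bddAbove_nbhdHK g α) (mem_nbhdHK_self g hα)

lemma csInf_nbhdHK_nonneg (hα : α ∈ I01) : 0 ≤ sInf (nbhdHK g α) :=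
  le_csInf ⟨α, mem_nbhdHK_self g hα⟩ fun _ h => h.1.1

lemma csSup_nbhdHK_le_one (hα : α ∈ I01) : sSup (nbhdHK g α) ≤ 1 :=
  csSup_le ⟨α, mem_nbhdHK_self g hα⟩ fun _ h => h.1.2

lemma ordConnected_nbhdHK (hg : MonotoneOn g I01) (α : ℝ) : (nbhdHK g α).OrdConnected := by
  refine ⟨fun x ⟨hx, hxα⟩ y ⟨hy, hyα⟩ z hz => ?_⟩
  have hzI : z ∈ I01 := ⟨hx.1.trans hz.1, hz.2.trans hy.2⟩
  refine ⟨hzI, abs_le.2 ⟨?_, ?_⟩⟩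
  · linarith [hg hx hzI hz.1, (abs_le.1 hxα).1]
  · linarith [hg hzI hy hz.2, (abs_le.1 hyα).2]

lemma csInf_nbhdHK_mono (hg : MonotoneOn g I01) (hα : α ∈ I01) (hα' : α' ∈ I01) (h : α ≤ α') :
    sInf (nbhdHK g α) ≤ sInf (nbhdHK g α') := by
  refine le_csInf ⟨α', mem_nbhdHK_self g hα'⟩ fun β ⟨hβ, hβα'⟩ => ?_
  rcases le_or_gt α β with hαβ | hβα
  · exact (csInf_nbhdHK_le hα).trans hαβ
  refine csInf_le (bddBelow_nbhdHK g α) ⟨hβ, abs_le.2 ⟨?_, ?_⟩⟩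
  · linarith [hg hα hα' h, (abs_le.1 hβα').1]
  · linarith [hg hβ hα hβα.le]

lemma csSup_nbhdHK_mono (hg : MonotoneOn g I01) (hα : α ∈ I01) (hα' : α' ∈ I01) (h : α ≤ α') :
    sSup (nbhdHK g α) ≤ sSup (nbhdHK g α') := by
  refine csSup_le ⟨α, mem_nbhdHK_self g hα⟩ fun β ⟨hβ, hβα⟩ => ?_
  rcases le_or_gt β α' with hβα' | hα'β
  · exact hβα'.trans (le_csSup_nbhdHK hα')
  refine le_csSup (bddAbove_nbhdHK g α') ⟨hβ, abs_le.2 ⟨?_, ?_⟩⟩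
  · linarith [hg hα' hβ hα'β.le]
  · linarith [hg hα hα' h, (abs_le.1 hβα).2]

lemma nbhdHK_eq_Icc (hg : MonotoneOn g I01) (h0 : g α - 1 ≤ g 0) (h1 : g 1 ≤ g α + 1) :
    nbhdHK g α = I01 := by
  refine (nbhdHK_subset g α).antisymm fun β hβ => ⟨hβ, abs_le.2 ⟨?_, ?_⟩⟩
  · linarith [hg (by simp) hβ hβ.1]
  · linarith [hg hβ (by simp) hβ.2]

lemma nbhdHK_ae_eq_Icc (hg : MonotoneOn g I01) (hα : α ∈ I01) :
    nbhdHK g α =ᵐ[volume] Icc (sInf (nbhdHK g α)) (sSup (nbhdHK g α)) := by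
  have hconn : IsConnected (nbhdHK g α) :=
    ⟨⟨α, mem_nbhdHK_self g hα⟩, (ordConnected_nbhdHK hg α).isPreconnected⟩
  refine ae_eq_of_subset_of_measure_ge
    (subset_Icc_csInf_csSup (bddBelow_nbhdHK g α) (bddAbove_nbhdHK g α)) ?_
    (ordConnected_nbhdHK hg α).measurableSet.nullMeasurableSet measure_Icc_lt_top.ne
  rw [← measure_congr Ioo_ae_eq_Icc]
  exact measure_mono (hconn.Ioo_csInf_csSup_subset (bddBelow_nbhdHK g α) (bddAbove_nbhdHK g α))

end Neighbourhood

/-- Parametrised by `[0, 1]`, so that it is also meaningful (and equal to `g a`) when `a = b`. -/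
noncomputable def mean (g : ℝ → ℝ) (a b : ℝ) : ℝ := ∫ t in (0:ℝ)..1, g (a + t * (b - a))

section Mean

variable {g : ℝ → ℝ} {a b a' b' : ℝ}

@[simp] lemma mean_self (g : ℝ → ℝ) (a : ℝ) : mean g a a = g a := by simp [mean]

lemma mean_eq_integral_div (hab : a < b) : mean g a b = (∫ x in a..b, g x) / (b - a) := by
  have hba : b - a ≠ 0 := (sub_pos.2 hab).ne'
  simp only [mean, mul_comm _ (b - a), intervalIntegral.integral_comp_add_mul _ hba]
  simp [div_eq_inv_mul]

lemma intervalIntegrable_of_monotoneOn (hg : MonotoneOn g I01) (ha : a ∈ I01) (hb : b ∈ I01) :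
    IntervalIntegrable g volume a b :=
  (hg.mono (uIcc_subset_Icc ha hb)).intervalIntegrable

lemma add_mul_sub_mem_Icc (ha : 0 ≤ a) (hab : a ≤ b) (hb : b ≤ 1) {t : ℝ} (ht : t ∈ I01) :
    a + t * (b - a) ∈ I01 :=
  ⟨by nlinarith [ht.1], by nlinarith [ht.2]⟩

lemma intervalIntegrable_comp_add_mul (hg : MonotoneOn g I01) (ha : 0 ≤ a) (hab : a ≤ b)
    (hb : b ≤ 1) : IntervalIntegrable (fun t => g (a + t * (b - a))) volume 0 1 := by
  refine MonotoneOn.intervalIntegrable fun s hs t ht hst => hg ?_ ?_ ?_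
  · exact add_mul_sub_mem_Icc ha hab hb (by simpa using hs)
  · exact add_mul_sub_mem_Icc ha hab hb (by simpa using ht)
  · nlinarith

lemma integral_convex_comb (c p q : ℝ) :
    ∫ t in (0:ℝ)..1, c * ((1 - t) * p + t * q) = c * (p + q) / 2 := by
  have h : ∀ t : ℝ, c * ((1 - t) * p + t * q) = c * p + t * (c * (q - p)) := fun t => by ring
  simp only [h]
  rw [intervalIntegral.integral_add intervalIntegrable_const
    ((continuous_mul_const _).intervalIntegrable _ _),
    intervalIntegral.integral_mul_const (c * (q - p)) (fun x : ℝ => x)]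
  norm_num
  ring

lemma mean_mono (hg : MonotoneOn g I01) (ha : 0 ≤ a) (hab : a ≤ b) (ha'b' : a' ≤ b')
    (hb' : b' ≤ 1) (haa' : a ≤ a') (hbb' : b ≤ b') : mean g a b ≤ mean g a' b' := by
  refine intervalIntegral.integral_mono_on zero_le_one
    (intervalIntegrable_comp_add_mul hg ha hab (hbb'.trans hb'))
    (intervalIntegrable_comp_add_mul hg (ha.trans haa') ha'b' hb') fun t ht => hg ?_ ?_ ?_
  · exact add_mul_sub_mem_Icc ha hab (hbb'.trans hb') ht
  · exact add_mul_sub_mem_Icc (ha.trans haa') ha'b' hb' ht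
  · nlinarith [ht.1, ht.2]

lemma mean_sub_mean_le (hg : MonotoneOn g I01) (ha : 0 ≤ a) (hab : a ≤ b) (ha'b' : a' ≤ b')
    (hb' : b' ≤ 1) (haa' : a ≤ a') (hbb' : b ≤ b') {Λ : ℝ}
    (hΛ : ∀ x ∈ I01, ∀ y ∈ I01, x ≤ y → g y - g x ≤ Λ * (y - x)) :
    mean g a' b' - mean g a b ≤ Λ * ((a' - a) + (b' - b)) / 2 := by
  have hI := intervalIntegrable_comp_add_mul hg ha hab (hbb'.trans hb')
  have hI' := intervalIntegrable_comp_add_mul hg (ha.trans haa') ha'b' hb'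
  have h := intervalIntegral.integral_mono_on zero_le_one (hI'.sub hI)
    ((continuous_const.mul (by fun_prop)).intervalIntegrable 0 1)
    (g := fun t => Λ * ((1 - t) * (a' - a) + t * (b' - b))) fun t ht =>
      (hΛ _ (add_mul_sub_mem_Icc ha hab (hbb'.trans hb') ht) _
        (add_mul_sub_mem_Icc (ha.trans haa') ha'b' hb' ht) (by nlinarith [ht.1, ht.2])).trans_eq
        (by ring)
  rwa [intervalIntegral.integral_sub hI' hI, integral_convex_comb] at h

lemma le_mean_sub_mean (hg : MonotoneOn g I01) (ha : 0 ≤ a) (hab : a ≤ b) (ha'b' : a' ≤ b')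
    (hb' : b' ≤ 1) (haa' : a ≤ a') (hbb' : b ≤ b') {μ : ℝ}
    (hμ : ∀ x ∈ I01, ∀ y ∈ I01, x ≤ y → μ * (y - x) ≤ g y - g x) :
    μ * ((a' - a) + (b' - b)) / 2 ≤ mean g a' b' - mean g a b := by
  have hI := intervalIntegrable_comp_add_mul hg ha hab (hbb'.trans hb')
  have hI' := intervalIntegrable_comp_add_mul hg (ha.trans haa') ha'b' hb'
  have h := intervalIntegral.integral_mono_on zero_le_one
    ((continuous_const.mul (by fun_prop)).intervalIntegrable 0 1) (hI'.sub hI)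
    (f := fun t => μ * ((1 - t) * (a' - a) + t * (b' - b))) fun t ht =>
      (hμ _ (add_mul_sub_mem_Icc ha hab (hbb'.trans hb') ht) _
        (add_mul_sub_mem_Icc (ha.trans haa') ha'b' hb' ht) (by nlinarith [ht.1, ht.2])).trans_eq'
        (by ring)
  rwa [intervalIntegral.integral_sub hI' hI, integral_convex_comb] at h

end Mean

section Update

variable {g : ℝ → ℝ} {α α' : ℝ}

lemma updateHK_eq_mean (hg : MonotoneOn g I01) (hα : α ∈ I01) :
    updateHK g α = mean g (sInf (nbhdHK g α)) (sSup (nbhdHK g α)) := by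
  have haα := csInf_nbhdHK_le (g := g) hα
  have hαb := le_csSup_nbhdHK (g := g) hα
  have hae := nbhdHK_ae_eq_Icc hg hα
  have hvol : (volume (nbhdHK g α)).toReal = sSup (nbhdHK g α) - sInf (nbhdHK g α) := by
    rw [measure_congr hae, Real.volume_Icc, ENNReal.toReal_ofReal (by linarith)]
  rcases (haα.trans hαb).lt_or_eq with hab | hab
  · rw [updateHK, hvol, if_pos (sub_pos.2 hab), setIntegral_congr_set hae,
      integral_Icc_eq_integral_Ioc, ← intervalIntegral.integral_of_le hab.le,
      mean_eq_integral_div hab]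
  · rw [updateHK, hvol, if_neg (by linarith), ← hab, mean_self, le_antisymm haα (hab ▸ hαb)]

theorem _root_.MonotoneOn.updateHK (hg : MonotoneOn g I01) : MonotoneOn (updateHK g) I01 := by
  intro α hα α' hα' h
  rw [updateHK_eq_mean hg hα, updateHK_eq_mean hg hα']
  exact mean_mono hg (csInf_nbhdHK_nonneg hα) ((csInf_nbhdHK_le hα).trans (le_csSup_nbhdHK hα))
    ((csInf_nbhdHK_le hα').trans (le_csSup_nbhdHK hα')) (csSup_nbhdHK_le_one hα')
    (csInf_nbhdHK_mono hg hα hα' h) (csSup_nbhdHK_mono hg hα hα' h)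

lemma monotoneOn_iterate_updateHK (hg : MonotoneOn g I01) (n : ℕ) :
    MonotoneOn (updateHK^[n] g) I01 := by
  induction n with
  | zero => exact hg
  | succ n ih => rw [Function.iterate_succ_apply']; exact ih.updateHK

lemma nbhdHK_add_const (g : ℝ → ℝ) (k α : ℝ) : nbhdHK (fun x => g x + k) α = nbhdHK g α := by
  simp [nbhdHK]

lemma updateHK_add_const (hg : IntegrableOn g I01) (k : ℝ) :
    updateHK (fun x => g x + k) = fun α => updateHK g α + k := by
  funext α
  have hfin : volume (nbhdHK g α) ≠ ⊤ :=
    (measure_mono (nbhdHK_subset g α)).trans_lt measure_Icc_lt_top |>.ne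
  simp only [updateHK, nbhdHK_add_const]
  split_ifs with h
  · rw [integral_add (hg.mono_set (nbhdHK_subset g α)) (integrableOn_const hfin),
      setIntegral_const, smul_eq_mul, Measure.real, add_div, mul_div_cancel_left₀ _ h.ne']
  · rfl

lemma iterate_updateHK_add_const (hg : MonotoneOn g I01) (k : ℝ) (n : ℕ) :
    updateHK^[n] (fun x => g x + k) = fun α => updateHK^[n] g α + k := by
  induction n with
  | zero => rfl
  | succ n ih =>
    rw [Function.iterate_succ_apply', Function.iterate_succ_apply', ih,
      updateHK_add_const ((monotoneOn_iterate_updateHK hg n).integrableOn_isCompact isCompact_Icc)]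

end Update

def IsSymmAbout (c : ℝ) (g : ℝ → ℝ) : Prop := ∀ α ∈ I01, g α + g (1 - α) = c

section Symmetry

variable {g : ℝ → ℝ} {α : ℝ}

lemma one_sub_mem_Icc (hα : α ∈ I01) : 1 - α ∈ I01 := ⟨by linarith [hα.2], by linarith [hα.1]⟩

lemma isSymmAbout_of_ae {c : ℝ} (hc : ContinuousOn g I01)
    (hae : ∀ᵐ α ∂(volume.restrict I01), g α + g (1 - α) = c) : IsSymmAbout c g :=
  Measure.eqOn_Icc_of_ae_eq volume zero_ne_one hae
    (hc.add (hc.comp (by fun_prop) fun _ => one_sub_mem_Icc)) continuousOn_const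

lemma nbhdHK_one_sub (hsym : IsSymmAbout 0 g) (hα : α ∈ I01) :
    nbhdHK g (1 - α) = (fun x => 1 - x) ⁻¹' nbhdHK g α := by
  ext β
  simp only [nbhdHK, mem_preimage, mem_ofPred_eq]
  rw [show 1 - β ∈ I01 ↔ β ∈ I01 from ⟨fun h => by simpa using one_sub_mem_Icc h, one_sub_mem_Icc⟩]
  refine and_congr_right fun hβ => ?_
  rw [show g β - g (1 - α) = -(g (1 - β) - g α) by linarith [hsym β hβ, hsym α hα], abs_neg]

lemma updateHK_one_sub (hg : MonotoneOn g I01) (hsym : IsSymmAbout 0 g) (hα : α ∈ I01) :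
    updateHK g (1 - α) = -updateHK g α := by
  have hmp := Measure.measurePreserving_sub_left volume (1 : ℝ)
  have hvol : volume (nbhdHK g (1 - α)) = volume (nbhdHK g α) := by
    rw [nbhdHK_one_sub hsym hα,
      hmp.measure_preimage (ordConnected_nbhdHK hg α).measurableSet.nullMeasurableSet]
  have hint : ∫ β in nbhdHK g (1 - α), g β = -∫ β in nbhdHK g α, g β := by
    have hmeas := (ordConnected_nbhdHK hg α).measurableSet
    rw [nbhdHK_one_sub hsym hα, ← integral_neg,
      ← hmp.setIntegral_preimage_emb (measurableEmbedding_subLeft 1) (fun y => -g y)]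
    refine setIntegral_congr_fun ((measurableEmbedding_subLeft 1).measurable hmeas) fun β hβ => ?_
    have hβ' : β ∈ I01 := by simpa using one_sub_mem_Icc (nbhdHK_subset g α hβ)
    linarith [hsym β hβ']
  simp only [updateHK, hvol, hint]
  split_ifs
  · ring
  · linarith [hsym α hα]

lemma IsSymmAbout.apply_zero (hsym : IsSymmAbout 0 g) : g 0 = -g 1 := by
  have h := hsym 0 (by simp)
  rw [sub_zero] at h
  linarith

lemma IsSymmAbout.integral_eq_zero (hsym : IsSymmAbout 0 g) {b : ℝ} (hb : b ∈ I01) :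
    ∫ x in (1 - b)..b, g x = 0 := by
  have h : ∫ x in (1 - b)..b, g (1 - x) = ∫ x in (1 - b)..b, -g x := by
    refine intervalIntegral.integral_congr fun x hx => ?_
    linarith [hsym x (uIcc_subset_Icc (one_sub_mem_Icc hb) hb hx)]
  rw [intervalIntegral.integral_comp_sub_left, intervalIntegral.integral_neg] at h
  simp only [sub_sub_cancel] at h
  linarith

lemma updateHK_isSymmAbout_zero (hg : MonotoneOn g I01) (hsym : IsSymmAbout 0 g) :
    IsSymmAbout 0 (updateHK g) := fun α hα => by
  rw [updateHK_one_sub hg hsym hα, add_neg_cancel]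

end Symmetry

section Regular

variable {g : ℝ → ℝ} {μ Λ : ℝ} {x y : ℝ}

lemma _root_.RegularOnHK.sub_le_mul (hreg : RegularOnHK μ Λ g I01) (hx : x ∈ I01) (hy : y ∈ I01)
    (hxy : x ≤ y) : g y - g x ≤ Λ * (y - x) := by
  have h := (hreg y hy x hx).2
  rw [abs_of_nonneg (sub_nonneg.2 hxy)] at h
  exact (le_abs_self _).trans h

lemma _root_.RegularOnHK.mul_le_sub (hg : MonotoneOn g I01) (hreg : RegularOnHK μ Λ g I01)
    (hx : x ∈ I01) (hy : y ∈ I01) (hxy : x ≤ y) : μ * (y - x) ≤ g y - g x := by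
  have h := (hreg y hy x hx).1
  rwa [abs_of_nonneg (sub_nonneg.2 hxy), abs_of_nonneg (sub_nonneg.2 (hg hx hy hxy))] at h

lemma _root_.RegularOnHK.le (hreg : RegularOnHK μ Λ g I01) : μ ≤ Λ := by
  simpa using (hreg 1 (by simp) 0 (by simp)).1.trans (hreg 1 (by simp) 0 (by simp)).2

lemma _root_.RegularOnHK.continuousOn (hreg : RegularOnHK μ Λ g I01) : ContinuousOn g I01 :=
  (LipschitzOnWith.of_dist_le' fun x hx y hy => (hreg x hx y hy).2).continuousOn

lemma regularOnHK_of_forall_le (hμ : 0 ≤ μ)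
    (h : ∀ x ∈ I01, ∀ y ∈ I01, x ≤ y → μ * (y - x) ≤ g y - g x ∧ g y - g x ≤ Λ * (y - x)) :
    RegularOnHK μ Λ g I01 := by
  intro x hx y hy
  rcases le_total x y with hxy | hyx
  · obtain ⟨h1, h2⟩ := h x hx y hy hxy
    rw [abs_sub_comm x, abs_sub_comm (g x), abs_of_nonneg (sub_nonneg.2 hxy),
      abs_of_nonneg (by nlinarith)]
    exact ⟨h1, h2⟩
  · obtain ⟨h1, h2⟩ := h y hy x hx hyx
    rw [abs_of_nonneg (sub_nonneg.2 hyx), abs_of_nonneg (by nlinarith)]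
    exact ⟨h1, h2⟩

end Regular

section Endpoints

variable {g : ℝ → ℝ} {α : ℝ}

lemma isClosed_nbhdHK (hc : ContinuousOn g I01) (α : ℝ) : IsClosed (nbhdHK g α) :=
  (hc.sub continuousOn_const).abs.preimage_isClosed_of_isClosed isClosed_Icc isClosed_Iic

lemma csInf_mem_nbhdHK (hc : ContinuousOn g I01) (hα : α ∈ I01) :
    sInf (nbhdHK g α) ∈ nbhdHK g α :=
  (isClosed_nbhdHK hc α).csInf_mem ⟨α, mem_nbhdHK_self g hα⟩ (bddBelow_nbhdHK g α)

lemma csSup_mem_nbhdHK (hc : ContinuousOn g I01) (hα : α ∈ I01) :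
    sSup (nbhdHK g α) ∈ nbhdHK g α :=
  (isClosed_nbhdHK hc α).csSup_mem ⟨α, mem_nbhdHK_self g hα⟩ (bddAbove_nbhdHK g α)

lemma apply_csSup_nbhdHK (hg : MonotoneOn g I01) (hc : ContinuousOn g I01) (hα : α ∈ I01)
    (hb : sSup (nbhdHK g α) < 1) : g (sSup (nbhdHK g α)) = g α + 1 := by
  have hbN := csSup_mem_nbhdHK hc hα
  refine le_antisymm (by linarith [(abs_le.1 hbN.2).2]) ?_
  have himg : g '' Ioc (sSup (nbhdHK g α)) 1 ⊆ Ici (g α + 1) := by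
    rintro _ ⟨y, hy, rfl⟩
    have hyI : y ∈ I01 := ⟨hbN.1.1.trans hy.1.le, hy.2⟩
    have hyN : ¬ |g y - g α| ≤ 1 := fun h =>
      hy.1.not_ge (le_csSup (bddAbove_nbhdHK g α) ⟨hyI, h⟩)
    have hαy := hg hα hyI ((le_csSup_nbhdHK hα).trans hy.1.le)
    rw [abs_of_nonneg (sub_nonneg.2 hαy)] at hyN
    exact mem_Ici.2 (by linarith)
  have hcl : sSup (nbhdHK g α) ∈ closure (Ioc (sSup (nbhdHK g α)) 1) := by
    rw [closure_Ioc hb.ne]; exact ⟨le_rfl, hb.le⟩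
  exact closure_minimal himg isClosed_Ici
    (((hc _ hbN.1).mono fun y hy => ⟨hbN.1.1.trans hy.1.le, hy.2⟩).mem_closure_image hcl)

lemma apply_csInf_nbhdHK (hg : MonotoneOn g I01) (hc : ContinuousOn g I01) (hα : α ∈ I01)
    (ha : 0 < sInf (nbhdHK g α)) : g (sInf (nbhdHK g α)) = g α - 1 := by
  have haN := csInf_mem_nbhdHK hc hα
  refine le_antisymm ?_ (by linarith [(abs_le.1 haN.2).1])
  have himg : g '' Ico 0 (sInf (nbhdHK g α)) ⊆ Iic (g α - 1) := by
    rintro _ ⟨y, hy, rfl⟩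
    have hyI : y ∈ I01 := ⟨hy.1, hy.2.le.trans haN.1.2⟩
    have hyN : ¬ |g y - g α| ≤ 1 := fun h =>
      hy.2.not_ge (csInf_le (bddBelow_nbhdHK g α) ⟨hyI, h⟩)
    have hyα := hg hyI hα (hy.2.le.trans (csInf_nbhdHK_le hα))
    rw [abs_of_nonpos (sub_nonpos.2 hyα)] at hyN
    exact mem_Iic.2 (by linarith)
  have hcl : sInf (nbhdHK g α) ∈ closure (Ico 0 (sInf (nbhdHK g α))) := by
    rw [closure_Ico ha.ne]; exact ⟨ha.le, le_rfl⟩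
  exact closure_minimal himg isClosed_Iic
    (((hc _ haN.1).mono fun y hy => ⟨hy.1, hy.2.le.trans haN.1.2⟩).mem_closure_image hcl)

end Endpoints

section Displacement

variable {g : ℝ → ℝ} {μ Λ : ℝ} {α α' : ℝ}

lemma mul_csInf_nbhdHK_sub_le (hg : MonotoneOn g I01) (hreg : RegularOnHK μ Λ g I01)
    (hα : α ∈ I01) (hα' : α' ∈ I01) (h : α ≤ α') :
    μ * (sInf (nbhdHK g α') - sInf (nbhdHK g α)) ≤ g α' - g α := by
  have haa' := csInf_nbhdHK_mono hg hα hα' h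
  rcases (csInf_nbhdHK_nonneg (g := g) hα').eq_or_lt with ha' | ha'
  · have ha : sInf (nbhdHK g α) = 0 := le_antisymm (ha' ▸ haa') (csInf_nbhdHK_nonneg hα)
    rw [← ha', ha, sub_self, mul_zero, sub_nonneg]
    exact hg hα hα' h
  · have haN := csInf_mem_nbhdHK hreg.continuousOn hα
    have ha'N := csInf_mem_nbhdHK hreg.continuousOn hα'
    linarith [hreg.mul_le_sub hg haN.1 ha'N.1 haa', (abs_le.1 haN.2).1,
      apply_csInf_nbhdHK hg hreg.continuousOn hα' ha']

lemma mul_csSup_nbhdHK_sub_le (hg : MonotoneOn g I01) (hreg : RegularOnHK μ Λ g I01)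
    (hα : α ∈ I01) (hα' : α' ∈ I01) (h : α ≤ α') :
    μ * (sSup (nbhdHK g α') - sSup (nbhdHK g α)) ≤ g α' - g α := by
  have hbb' := csSup_nbhdHK_mono hg hα hα' h
  rcases (csSup_nbhdHK_le_one (g := g) hα).eq_or_lt with hb | hb
  · have hb' : sSup (nbhdHK g α') = 1 := le_antisymm (csSup_nbhdHK_le_one hα') (hb ▸ hbb')
    rw [hb, hb', sub_self, mul_zero, sub_nonneg]
    exact hg hα hα' h
  · have hbN := csSup_mem_nbhdHK hreg.continuousOn hα
    have hb'N := csSup_mem_nbhdHK hreg.continuousOn hα'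
    linarith [hreg.mul_le_sub hg hbN.1 hb'N.1 hbb', (abs_le.1 hb'N.2).2,
      apply_csSup_nbhdHK hg hreg.continuousOn hα hb]

/-- When the diameter exceeds `2`, no neighbourhood contains both `0` and `1`, so at least one
endpoint of the neighbourhood moves with the agent. -/
lemma sub_le_mul_nbhdHK_displacement (hg : MonotoneOn g I01) (hreg : RegularOnHK μ Λ g I01)
    (hD : 2 < g 1 - g 0) (hα : α ∈ I01) (hα' : α' ∈ I01) (h : α ≤ α') :
    g α' - g α ≤ Λ * ((sInf (nbhdHK g α') - sInf (nbhdHK g α)) +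
      (sSup (nbhdHK g α') - sSup (nbhdHK g α))) := by
  have hc := hreg.continuousOn
  have haN := csInf_mem_nbhdHK hc hα
  have ha'N := csInf_mem_nbhdHK hc hα'
  have hbN := csSup_mem_nbhdHK hc hα
  have hb'N := csSup_mem_nbhdHK hc hα'
  have haa' := csInf_nbhdHK_mono hg hα hα' h
  have hbb' := csSup_nbhdHK_mono hg hα hα' h
  have hΔa := hreg.sub_le_mul haN.1 ha'N.1 haa'
  have hΔb := hreg.sub_le_mul hbN.1 hb'N.1 hbb'
  have hga := hg haN.1 ha'N.1 haa'
  have hgb := hg hbN.1 hb'N.1 hbb'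
  have ha := abs_le.1 haN.2
  have ha' := abs_le.1 ha'N.2
  have hb := abs_le.1 hbN.2
  have hb' := abs_le.1 hb'N.2
  rcases (csSup_nbhdHK_le_one (g := g) hα').lt_or_eq with hb'1 | hb'1
  · linarith [apply_csSup_nbhdHK hg hc hα' hb'1]
  rcases (csInf_nbhdHK_nonneg (g := g) hα).eq_or_lt with ha0 | ha0
  · have hg0 : g (sInf (nbhdHK g α)) = g 0 := by rw [← ha0]
    have hg1 : g (sSup (nbhdHK g α')) = g 1 := by rw [hb'1]
    linarith
  · linarith [apply_csInf_nbhdHK hg hc hα ha0]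

end Displacement

section UpdateRegular

variable {g : ℝ → ℝ} {μ Λ : ℝ} {α α' : ℝ}

lemma updateHK_sub_le_mul_displacement (hg : MonotoneOn g I01)
    (hΛ : ∀ x ∈ I01, ∀ y ∈ I01, x ≤ y → g y - g x ≤ Λ * (y - x))
    (hα : α ∈ I01) (hα' : α' ∈ I01) (h : α ≤ α') :
    updateHK g α' - updateHK g α ≤ Λ * ((sInf (nbhdHK g α') - sInf (nbhdHK g α)) +
      (sSup (nbhdHK g α') - sSup (nbhdHK g α))) / 2 := by
  rw [updateHK_eq_mean hg hα, updateHK_eq_mean hg hα']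
  exact mean_sub_mean_le hg (csInf_nbhdHK_nonneg hα)
    ((csInf_nbhdHK_le hα).trans (le_csSup_nbhdHK hα))
    ((csInf_nbhdHK_le hα').trans (le_csSup_nbhdHK hα')) (csSup_nbhdHK_le_one hα')
    (csInf_nbhdHK_mono hg hα hα' h) (csSup_nbhdHK_mono hg hα hα' h) hΛ

lemma mul_displacement_le_updateHK_sub (hg : MonotoneOn g I01)
    (hμ : ∀ x ∈ I01, ∀ y ∈ I01, x ≤ y → μ * (y - x) ≤ g y - g x)
    (hα : α ∈ I01) (hα' : α' ∈ I01) (h : α ≤ α') :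
    μ * ((sInf (nbhdHK g α') - sInf (nbhdHK g α)) +
      (sSup (nbhdHK g α') - sSup (nbhdHK g α))) / 2 ≤ updateHK g α' - updateHK g α := by
  rw [updateHK_eq_mean hg hα, updateHK_eq_mean hg hα']
  exact le_mean_sub_mean hg (csInf_nbhdHK_nonneg hα)
    ((csInf_nbhdHK_le hα).trans (le_csSup_nbhdHK hα))
    ((csInf_nbhdHK_le hα').trans (le_csSup_nbhdHK hα')) (csSup_nbhdHK_le_one hα')
    (csInf_nbhdHK_mono hg hα hα' h) (csSup_nbhdHK_mono hg hα hα' h) hμ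

lemma updateHK_sub_le (hg : MonotoneOn g I01) (hreg : RegularOnHK μ Λ g I01) (hμ : 0 < μ)
    (hα : α ∈ I01) (hα' : α' ∈ I01) (h : α ≤ α') :
    updateHK g α' - updateHK g α ≤ Λ ^ 2 / μ * (α' - α) := by
  have hU := updateHK_sub_le_mul_displacement hg (fun _ hx _ hy => hreg.sub_le_mul hx hy) hα hα' h
  have ha := mul_csInf_nbhdHK_sub_le hg hreg hα hα' h
  have hb := mul_csSup_nbhdHK_sub_le hg hreg hα hα' h
  have hgα := hreg.sub_le_mul hα hα' h
  have hΛ : 0 ≤ Λ := hμ.le.trans hreg.le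
  refine hU.trans ?_
  rw [div_mul_eq_mul_div, le_div_iff₀ hμ]
  nlinarith [mul_le_mul_of_nonneg_left (add_le_add (ha.trans hgα) (hb.trans hgα)) hΛ]

lemma le_updateHK_sub (hg : MonotoneOn g I01) (hreg : RegularOnHK μ Λ g I01) (hμ : 0 < μ)
    (hD : 2 < g 1 - g 0) (hα : α ∈ I01) (hα' : α' ∈ I01) (h : α ≤ α') :
    μ ^ 2 / (2 * Λ) * (α' - α) ≤ updateHK g α' - updateHK g α := by
  have hU := mul_displacement_le_updateHK_sub hg (fun _ hx _ hy => hreg.mul_le_sub hg hx hy)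
    hα hα' h
  have hX := (hreg.mul_le_sub hg hα hα' h).trans
    (sub_le_mul_nbhdHK_displacement hg hreg hD hα hα' h)
  have hΛ : 0 < Λ := hμ.trans_le hreg.le
  refine le_trans ?_ hU
  rw [div_mul_eq_mul_div, div_le_iff₀ (by positivity)]
  nlinarith [mul_le_mul_of_nonneg_left hX hμ.le]

theorem _root_.RegularOnHK.updateHK (hg : MonotoneOn g I01) (hreg : RegularOnHK μ Λ g I01)
    (hμ : 0 < μ) (hD : 2 < g 1 - g 0) :
    RegularOnHK (μ ^ 2 / (2 * Λ)) (Λ ^ 2 / μ) (updateHK g) I01 :=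
  regularOnHK_of_forall_le (div_nonneg (sq_nonneg μ) (by linarith [hreg.le]))
    fun _ hx _ hy hxy =>
      ⟨le_updateHK_sub hg hreg hμ hD hx hy hxy, updateHK_sub_le hg hreg hμ hx hy hxy⟩

end UpdateRegular

/-- For `g` symmetric about `0`, `apply_one_le` says that the diameter `g 1 - g 0 = 2 * g 1` is
at most `2`. -/
structure IsBalanced (g : ℝ → ℝ) : Prop where
  monotoneOn : MonotoneOn g I01
  symm : IsSymmAbout 0 g
  apply_one_le : g 1 ≤ 1

section Balanced

variable {g : ℝ → ℝ} {β : ℝ}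

namespace IsBalanced

lemma apply_zero (hG : IsBalanced g) : g 0 = -g 1 := hG.symm.apply_zero

lemma apply_half (hG : IsBalanced g) : g (1 / 2) = 0 := by
  have h := hG.symm (1 / 2) (by norm_num)
  norm_num at h
  linarith

lemma apply_one_nonneg (hG : IsBalanced g) : 0 ≤ g 1 :=
  hG.apply_half ▸ hG.monotoneOn (by norm_num) (by simp) (by norm_num)


lemma Icc_zero_half_subset_nbhdHK (hG : IsBalanced g) (hβ : β ∈ I01) (hβ0 : g β ≤ 0) :
    Icc 0 (1 / 2) ⊆ nbhdHK g β := by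
  intro γ hγ
  have hγI : γ ∈ I01 := ⟨hγ.1, by linarith [hγ.2]⟩
  have h0 := hG.apply_zero
  have h1 := hG.apply_one_le
  refine ⟨hγI, abs_le.2 ⟨?_, ?_⟩⟩
  · linarith [hG.monotoneOn (by simp) hγI hγ.1]
  · linarith [hG.monotoneOn hγI (by norm_num) hγ.2, hG.apply_half, hG.monotoneOn (by simp) hβ hβ.1]

lemma csInf_nbhdHK_eq_zero (hG : IsBalanced g) (hβ : β ∈ I01) (hβ0 : g β ≤ 0) :
    sInf (nbhdHK g β) = 0 :=
  le_antisymm (csInf_le (bddBelow_nbhdHK g β)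
    (hG.Icc_zero_half_subset_nbhdHK hβ hβ0 ⟨le_rfl, by norm_num⟩)) (csInf_nbhdHK_nonneg hβ)

lemma half_le_csSup_nbhdHK (hG : IsBalanced g) (hβ : β ∈ I01) (hβ0 : g β ≤ 0) :
    1 / 2 ≤ sSup (nbhdHK g β) :=
  le_csSup (bddAbove_nbhdHK g β) (hG.Icc_zero_half_subset_nbhdHK hβ hβ0 ⟨by norm_num, le_rfl⟩)

/-- By symmetry the mass of `g` on `[1 - b, b]` cancels. -/
lemma updateHK_eq_integral_div (hG : IsBalanced g) (hβ : β ∈ I01) (hβ0 : g β ≤ 0) :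
    updateHK g β = (∫ x in (0:ℝ)..(1 - sSup (nbhdHK g β)), g x) / sSup (nbhdHK g β) := by
  have hb := hG.half_le_csSup_nbhdHK hβ hβ0
  have hbI : sSup (nbhdHK g β) ∈ I01 := ⟨by linarith, csSup_nbhdHK_le_one hβ⟩
  have hcI : 1 - sSup (nbhdHK g β) ∈ I01 := one_sub_mem_Icc hbI
  rw [updateHK_eq_mean hG.monotoneOn hβ, hG.csInf_nbhdHK_eq_zero hβ hβ0,
    mean_eq_integral_div (by linarith), sub_zero,
    ← intervalIntegral.integral_add_adjacent_intervals
      (intervalIntegrable_of_monotoneOn hG.monotoneOn (by simp) hcI)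
      (intervalIntegrable_of_monotoneOn hG.monotoneOn hcI hbI),
    hG.symm.integral_eq_zero hbI, add_zero]

lemma updateHK_mem_Icc_of_nonpos (hG : IsBalanced g) (hβ : β ∈ I01) (hβ0 : g β ≤ 0) :
    updateHK g β ∈ Icc ((1 - sSup (nbhdHK g β)) / sSup (nbhdHK g β) * g 0) 0 := by
  have hb := hG.half_le_csSup_nbhdHK hβ hβ0
  have hc : 0 ≤ 1 - sSup (nbhdHK g β) := by linarith [csSup_nbhdHK_le_one (g := g) hβ]
  have hcI : 1 - sSup (nbhdHK g β) ∈ I01 := ⟨hc, by linarith⟩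
  have hint := intervalIntegrable_of_monotoneOn hG.monotoneOn (a := 0) (by simp) hcI
  have hlow := intervalIntegral.integral_mono_on hc intervalIntegrable_const hint
    fun x hx => hG.monotoneOn (by simp) ⟨hx.1, hx.2.trans hcI.2⟩ hx.1
  have hup := intervalIntegral.integral_mono_on hc hint intervalIntegrable_const
    fun x hx => (hG.monotoneOn ⟨hx.1, hx.2.trans hcI.2⟩ (by norm_num)
      (by linarith [hx.2])).trans_eq hG.apply_half
  simp only [intervalIntegral.integral_const, sub_zero, smul_eq_mul, mul_zero] at hlow hup
  rw [hG.updateHK_eq_integral_div hβ hβ0, div_mul_eq_mul_div]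
  exact ⟨div_le_div_of_nonneg_right hlow (by linarith),
    div_nonpos_of_nonpos_of_nonneg hup (by linarith)⟩

lemma neg_one_le_updateHK_of_nonpos (hG : IsBalanced g) (hβ : β ∈ I01) (hβ0 : g β ≤ 0) :
    -1 ≤ updateHK g β := by
  have hb := hG.half_le_csSup_nbhdHK hβ hβ0
  have hb1 := csSup_nbhdHK_le_one (g := g) hβ
  have hr : (1 - sSup (nbhdHK g β)) / sSup (nbhdHK g β) ≤ 1 := by
    rw [div_le_one (by linarith)]; linarith
  have hr0 : 0 ≤ (1 - sSup (nbhdHK g β)) / sSup (nbhdHK g β) :=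
    div_nonneg (by linarith) (by linarith)
  nlinarith [(hG.updateHK_mem_Icc_of_nonpos hβ hβ0).1, hG.apply_zero, hG.apply_one_le,
    hG.apply_one_nonneg]

lemma updateHK_eq_zero_of_nbhdHK_eq (hG : IsBalanced g) (hβ : β ∈ I01) (h : nbhdHK g β = I01) :
    updateHK g β = 0 := by
  have h01 := hG.symm.integral_eq_zero (b := 1) (by simp)
  rw [sub_self] at h01
  rw [updateHK_eq_mean hG.monotoneOn hβ, h, csInf_Icc zero_le_one, csSup_Icc zero_le_one,
    mean_eq_integral_div one_pos, h01, zero_div]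

lemma apply_zero_nonpos (hG : IsBalanced g) : g 0 ≤ 0 := by
  linarith [hG.apply_zero, hG.apply_one_nonneg]

lemma updateHK_apply_one (hG : IsBalanced g) : updateHK g 1 = -updateHK g 0 := by
  simpa using updateHK_one_sub hG.monotoneOn hG.symm (α := 0) (by simp)

protected lemma updateHK (hG : IsBalanced g) : IsBalanced (updateHK g) where
  monotoneOn := hG.monotoneOn.updateHK
  symm := updateHK_isSymmAbout_zero hG.monotoneOn hG.symm
  apply_one_le := by
    linarith [hG.updateHK_apply_one,
      hG.neg_one_le_updateHK_of_nonpos (by simp) hG.apply_zero_nonpos]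

lemma updateHK_apply_one_le (hG : IsBalanced g) :
    updateHK g 1 ≤ (1 - sSup (nbhdHK g 0)) / sSup (nbhdHK g 0) * g 1 := by
  have h := (hG.updateHK_mem_Icc_of_nonpos (by simp) hG.apply_zero_nonpos).1
  rw [hG.apply_zero, mul_neg] at h
  linarith [hG.updateHK_apply_one]

lemma nbhdHK_zero_subset_updateHK (hG : IsBalanced g) : nbhdHK g 0 ⊆ nbhdHK (updateHK g) 0 := by
  rintro β ⟨hβ, hβ0⟩
  have hU0 := (hG.updateHK_mem_Icc_of_nonpos (by simp) hG.apply_zero_nonpos).2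
  have hU0' := hG.neg_one_le_updateHK_of_nonpos (by simp) hG.apply_zero_nonpos
  refine ⟨hβ, abs_le.2 ?_⟩
  rcases le_or_gt (g β) 0 with h | h
  · have := hG.neg_one_le_updateHK_of_nonpos hβ h
    have := (hG.updateHK_mem_Icc_of_nonpos hβ h).2
    constructor <;> linarith
  · have hN : nbhdHK g β = I01 :=
      nbhdHK_eq_Icc hG.monotoneOn (by linarith [(abs_le.1 hβ0).2]) (by linarith [hG.apply_one_le])
    rw [hG.updateHK_eq_zero_of_nbhdHK_eq hβ hN]
    constructor <;> linarith

lemma csSup_nbhdHK_zero_le_updateHK (hG : IsBalanced g) :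
    sSup (nbhdHK g 0) ≤ sSup (nbhdHK (updateHK g) 0) :=
  csSup_le_csSup (bddAbove_nbhdHK _ 0) ⟨0, mem_nbhdHK_self g (by simp)⟩
    hG.nbhdHK_zero_subset_updateHK

lemma updateHK_eq_zero_of_le_half (hG : IsBalanced g) (h : g 1 ≤ 1 / 2) {α : ℝ} (hα : α ∈ I01) :
    updateHK g α = 0 := by
  refine hG.updateHK_eq_zero_of_nbhdHK_eq hα (nbhdHK_eq_Icc hG.monotoneOn ?_ ?_)
  · linarith [hG.monotoneOn hα (by simp) hα.2, hG.apply_zero]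
  · linarith [hG.monotoneOn (by simp) hα hα.1, hG.apply_zero]

lemma updateHK_apply_one_le_mul (hG : IsBalanced g) {b₀ : ℝ} (hb₀ : 0 < b₀)
    (hb : b₀ ≤ sSup (nbhdHK g 0)) : updateHK g 1 ≤ (1 - b₀) / b₀ * g 1 := by
  refine hG.updateHK_apply_one_le.trans (mul_le_mul_of_nonneg_right ?_ hG.apply_one_nonneg)
  rw [div_le_div_iff₀ (hb₀.trans_le hb) hb₀]
  nlinarith

lemma iterate_updateHK_apply_one_le (hG : IsBalanced g) {b₀ : ℝ} (hb₀ : 0 < b₀)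
    (hb : b₀ ≤ sSup (nbhdHK g 0)) (n : ℕ) :
    IsBalanced (updateHK^[n] g) ∧ b₀ ≤ sSup (nbhdHK (updateHK^[n] g) 0) ∧
      updateHK^[n] g 1 ≤ ((1 - b₀) / b₀) ^ n * g 1 := by
  have hr : 0 ≤ (1 - b₀) / b₀ :=
    div_nonneg (by linarith [csSup_nbhdHK_le_one (g := g) (α := 0) (by simp)]) hb₀.le
  induction n with
  | zero => exact ⟨hG, hb, by simp⟩
  | succ n ih =>
    obtain ⟨hGn, hbn, hn⟩ := ih
    rw [Function.iterate_succ_apply', pow_succ']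
    refine ⟨hGn.updateHK, hbn.trans hGn.csSup_nbhdHK_zero_le_updateHK, ?_⟩
    rw [mul_assoc]
    exact (hGn.updateHK_apply_one_le_mul hb₀ hbn).trans (mul_le_mul_of_nonneg_left hn hr)

lemma iterate_updateHK_eq_zero (hG : IsBalanced g) {b₀ : ℝ} (hb₀ : 1 / 2 ≤ b₀)
    (hb : b₀ ≤ sSup (nbhdHK g 0)) {K : ℕ} (hK : ((1 - b₀) / b₀) ^ K ≤ 1 / 2) {n : ℕ}
    (hn : K < n) {α : ℝ} (hα : α ∈ I01) : updateHK^[n] g α = 0 := by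
  obtain ⟨k, rfl⟩ : ∃ k, n = k + 1 := ⟨n - 1, by omega⟩
  obtain ⟨hGk, -, hk⟩ := hG.iterate_updateHK_apply_one_le (by linarith) hb k
  have hr : 0 ≤ (1 - b₀) / b₀ :=
    div_nonneg (by linarith [csSup_nbhdHK_le_one (g := g) (α := 0) (by simp)]) (by linarith)
  have hr1 : (1 - b₀) / b₀ ≤ 1 := by rw [div_le_one (by linarith)]; linarith
  have hpow := pow_le_pow_of_le_one hr hr1 (Nat.le_of_lt_succ hn)
  rw [Function.iterate_succ_apply']
  refine hGk.updateHK_eq_zero_of_le_half ?_ hα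
  nlinarith [hG.apply_one_le, hG.apply_one_nonneg, pow_nonneg hr k]

/-- The regularity of `g` makes agent `0` move up by `μ / 4`, while the Lipschitz bound on
`updateHK g` keeps agents slightly right of `1 / 2` within distance `1` of it. -/
lemma le_csSup_nbhdHK_updateHK {μ Λ : ℝ} (hG : IsBalanced g) (hreg : RegularOnHK μ Λ g I01)
    (hμ : 0 < μ) : 1 / 2 + (μ / Λ) ^ 2 / 4 ≤ sSup (nbhdHK (updateHK g) 0) := by
  have hΛ : 0 < Λ := hμ.trans_le hreg.le
  have hρ : (μ / Λ) ^ 2 ≤ 1 := pow_le_one₀ (by positivity) ((div_le_one hΛ).2 hreg.le)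
  have hxI : 1 / 2 + (μ / Λ) ^ 2 / 4 ∈ I01 := ⟨by positivity, by linarith⟩
  have hU0 : updateHK g 0 = mean g 0 (sSup (nbhdHK g 0)) := by
    rw [updateHK_eq_mean hG.monotoneOn (by simp), hG.csInf_nbhdHK_eq_zero (by simp)
      hG.apply_zero_nonpos]
  have hb := hG.half_le_csSup_nbhdHK (by simp) hG.apply_zero_nonpos
  have hdrop := le_mean_sub_mean hG.monotoneOn le_rfl le_rfl (by linarith)
    (csSup_nbhdHK_le_one (by simp)) le_rfl (by linarith)
    fun _ hx _ hy => hreg.mul_le_sub hG.monotoneOn hx hy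
  rw [← hU0, mean_self] at hdrop
  have hlip := updateHK_sub_le hG.monotoneOn hreg hμ (α := 1 / 2) (by norm_num) hxI
    (by linarith [sq_nonneg (μ / Λ)])
  rw [hG.updateHK.apply_half, show Λ ^ 2 / μ * (1 / 2 + (μ / Λ) ^ 2 / 4 - 1 / 2) = μ / 4 by
    field_simp; ring] at hlip
  have hmono := hG.updateHK.monotoneOn (a := 0) (by simp) hxI (by positivity)
  refine le_csSup (bddAbove_nbhdHK _ 0) ⟨hxI, abs_le.2 ⟨by linarith, ?_⟩⟩
  nlinarith [hG.apply_zero, hG.apply_one_le]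

end IsBalanced

end Balanced

/-- `RegularOnHK.updateHK` turns the regularity constants `p` of a profile of diameter `> 2`
into `regStep p`. -/
noncomputable def regStep (p : ℝ × ℝ) : ℝ × ℝ := (p.1 ^ 2 / (2 * p.2), p.2 ^ 2 / p.1)

section RegStep

variable {p : ℝ × ℝ}

lemma regStep_pos_le (h0 : 0 < p.1) (h : p.1 ≤ p.2) :
    0 < (regStep p).1 ∧ (regStep p).1 ≤ (regStep p).2 := by
  have h2 : 0 < p.2 := h0.trans_le h
  simp only [regStep]
  refine ⟨by positivity, ?_⟩
  rw [div_le_div_iff₀ (by positivity) h0]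
  nlinarith [pow_le_pow_left₀ h0.le h 3, pow_pos h2 3]

lemma regStep_ratio_le (h0 : 0 < p.1) (h : p.1 ≤ p.2) :
    (regStep p).1 / (regStep p).2 ≤ p.1 / p.2 := by
  have h2 : 0 < p.2 := h0.trans_le h
  simp only [regStep]
  rw [div_div_eq_mul_div, div_le_div_iff₀ (by positivity) h2]
  field_simp
  nlinarith [pow_le_pow_left₀ h0.le h 2, pow_pos h0 3, mul_pos h0 h2]

lemma regStep_iterate_pos_le (h0 : 0 < p.1) (h : p.1 ≤ p.2) (k : ℕ) :
    0 < (regStep^[k] p).1 ∧ (regStep^[k] p).1 ≤ (regStep^[k] p).2 := by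
  induction k with
  | zero => exact ⟨h0, h⟩
  | succ k ih => rw [Function.iterate_succ_apply']; exact regStep_pos_le ih.1 ih.2

lemma antitone_regStep_iterate_ratio (h0 : 0 < p.1) (h : p.1 ≤ p.2) :
    Antitone fun k => (regStep^[k] p).1 / (regStep^[k] p).2 :=
  antitone_nat_of_succ_le fun k => by
    rw [Function.iterate_succ_apply']
    exact regStep_ratio_le (regStep_iterate_pos_le h0 h k).1 (regStep_iterate_pos_le h0 h k).2

end RegStep

section Phases

variable {g : ℝ → ℝ} {μ Λ : ℝ}

lemma isSymmAbout_iterate_updateHK (hg : MonotoneOn g I01) (hsym : IsSymmAbout 0 g) (n : ℕ) :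
    IsSymmAbout 0 (updateHK^[n] g) := by
  induction n with
  | zero => exact hsym
  | succ n ih =>
    rw [Function.iterate_succ_apply']
    exact updateHK_isSymmAbout_zero (monotoneOn_iterate_updateHK hg n) ih

lemma iterate_updateHK_regularOnHK (hg : MonotoneOn g I01) (hreg : RegularOnHK μ Λ g I01)
    (hμ : 0 < μ) {n : ℕ} (hD : ∀ k < n, 2 < updateHK^[k] g 1 - updateHK^[k] g 0) :
    RegularOnHK (regStep^[n] (μ, Λ)).1 (regStep^[n] (μ, Λ)).2 (updateHK^[n] g) I01 := by
  induction n with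
  | zero => exact hreg
  | succ n ih =>
    rw [Function.iterate_succ_apply', Function.iterate_succ_apply']
    exact (ih fun k hk => hD k (by omega)).updateHK (monotoneOn_iterate_updateHK hg n)
      (regStep_iterate_pos_le (p := (μ, Λ)) hμ hreg.le n).1 (hD n n.lt_succ_self)

/-- Once the diameter has dropped to at most `2` (at the latest at time `t₁`), the constants
reached by then give a uniform contraction rate for the rest of the dynamics. -/
theorem exists_iterate_updateHK_eq_zero {m M : ℝ} (hm : 0 < m) (hmM : m ≤ M) (t₁ : ℕ) :
    ∃ t₂ : ℕ, ∀ g : ℝ → ℝ, MonotoneOn g I01 → RegularOnHK m M g I01 → IsSymmAbout 0 g →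
      updateHK^[t₁] g 1 - updateHK^[t₁] g 0 ≤ 2 → ∀ α ∈ I01, updateHK^[t₂] g α = 0 := by
  set ρ := fun k => (regStep^[k] (m, M)).1 / (regStep^[k] (m, M)).2
  have hρ : 0 < ρ t₁ := div_pos (regStep_iterate_pos_le (p := (m, M)) hm hmM t₁).1
    (by linarith [regStep_iterate_pos_le (p := (m, M)) hm hmM t₁])
  have hb₀ : 1 / 2 < 1 / 2 + ρ t₁ ^ 2 / 4 := by linarith [pow_pos hρ 2]
  obtain ⟨K, hK⟩ := exists_pow_lt_of_lt_one (by norm_num : (0:ℝ) < 1 / 2)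
    (show (1 - (1 / 2 + ρ t₁ ^ 2 / 4)) / (1 / 2 + ρ t₁ ^ 2 / 4) < 1 by
      rw [div_lt_one (by linarith)]; linarith)
  refine ⟨t₁ + 2 + K, fun g hg hreg hsym hD α hα => ?_⟩
  classical
  have hex : ∃ k, updateHK^[k] g 1 - updateHK^[k] g 0 ≤ 2 := ⟨t₁, hD⟩
  let s := Nat.find hex
  have hs : s ≤ t₁ := Nat.find_min' hex hD
  have hG : IsBalanced (updateHK^[s] g) :=
    ⟨monotoneOn_iterate_updateHK hg s, isSymmAbout_iterate_updateHK hg hsym s,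
      by linarith [Nat.find_spec hex, (isSymmAbout_iterate_updateHK hg hsym s).apply_zero]⟩
  have hreg_s := iterate_updateHK_regularOnHK hg hreg hm fun k hk => not_le.1 (Nat.find_min hex hk)
  have hb := hG.le_csSup_nbhdHK_updateHK hreg_s (regStep_iterate_pos_le (p := (m, M)) hm hmM s).1
  have hρs : ρ t₁ ^ 2 ≤ ρ s ^ 2 :=
    pow_le_pow_left₀ hρ.le (antitone_regStep_iterate_ratio (p := (m, M)) hm hmM hs) 2
  rw [show t₁ + 2 + K = (t₁ + 1 + K - s) + 1 + s by omega, Function.iterate_add_apply,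
    Function.iterate_succ_apply]
  exact hG.updateHK.iterate_updateHK_eq_zero hb₀.le (by linarith) hK.le (by omega) hα

end Phases

end HK

open HK in
theorem stmt11_general (m M : ℝ) (hm : 0 < m) (t₁ : ℕ) :
    ∃ t₂ : ℕ, ∀ f : ℝ → ℝ, MonotoneOn f (Icc 0 1) →
      RegularOnHK m M f (Icc 0 1) →
      (∃ c : ℝ, ∀ᵐ α ∂(volume.restrict (Icc (0:ℝ) 1)), f α + f (1 - α) = c) →
      updateHK^[t₁] f 1 - updateHK^[t₁] f 0 ≤ 2 →
      ∀ α ∈ Icc (0:ℝ) 1, ∀ β ∈ Icc (0:ℝ) 1,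
        updateHK^[t₂] f α = updateHK^[t₂] f β := by
  by_cases hmM : m ≤ M
  swap
  · exact ⟨0, fun f _ hreg => absurd hreg.le hmM⟩
  obtain ⟨t₂, ht₂⟩ := exists_iterate_updateHK_eq_zero hm hmM t₁
  refine ⟨t₂, fun f hf hreg ⟨c, hae⟩ hD α hα β hβ => ?_⟩
  have hsym : IsSymmAbout c f := isSymmAbout_of_ae hreg.continuousOn hae
  set g := fun x => f x - c / 2
  have hg : MonotoneOn g (Icc 0 1) := fun x hx y hy hxy => sub_le_sub_right (hf hx hy hxy) _
  have hshift : ∀ n, updateHK^[n] f = fun x => updateHK^[n] g x + c / 2 := fun n => by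
    rw [← iterate_updateHK_add_const hg]; simp [g]
  have hzero := ht₂ g hg (fun x hx y hy => by simpa [g] using hreg x hx y hy)
    (fun x hx => by simp only [g]; linarith [hsym x hx]) (by simpa [hshift] using hD)
  simp only [hshift, hzero α hα, hzero β hβ]

/-- for all `m, M > 0` and `t₁` there exists `t₂` such that every
symmetric `(m,M)`-regular profile `f` with `D(U^{t₁} f) ≤ 2` satisfies that
`U^{t₂} f` is a consensus (constant on `[0,1]`). -/
theorem stmt11 (m M : ℝ) (hm : 0 < m) (hM : 0 < M) (t₁ : ℕ) :
    ∃ t₂ : ℕ, ∀ f : ℝ → ℝ, MonotoneOn f (Icc 0 1) →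
      RegularOnHK m M f (Icc 0 1) →
      (∃ c : ℝ, ∀ᵐ α ∂(volume.restrict (Icc (0:ℝ) 1)), f α + f (1 - α) = c) →
      updateHK^[t₁] f 1 - updateHK^[t₁] f 0 ≤ 2 →
      ∀ α ∈ Icc (0:ℝ) 1, ∀ β ∈ Icc (0:ℝ) 1,
        updateHK^[t₂] f α = updateHK^[t₂] f β :=
  stmt11_general m M hm t₁
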